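/- (Classical global supersolution barrier for the regularised equation.) Let d ≥ 1, 0 < λ ≤ Λ, θ ≥ 1, R > 0, δ > 0 and K_f, K_g ≥ 0. Let F : S(d) → ℝ be (λ,Λ)-uniformly elliptic with F(0) = 0, let Ω ⊆ ℝᵈ be contained in the closed ball of radius R centred at the origin, and let x₀ ∈ ℝᵈ satisfy ‖x − x₀‖ ≥ δ for every x ∈ Ω. Then there exist constants C₁, C₂ > 0 depending only on d, λ, θ, δ, R, ‖x₀‖, K_f and K_g (and not on ε) such that the smooth function w(x) := C₂ − C₁ ‖x − x₀‖² satisfies w(x) ≥ K_g for every x ∈ Ω, and for every ε ∈ (0,1) and every x ∈ Ω the pointwise supersolution inequality (ε + ‖∇w(x)‖²)^{θ/2} ( ε w(x) + F(D²w(x)) ) ≥ K_f holds, where ∇w(x) = −2C₁(x − x₀) and D²w(x) = −2C₁ I. -/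

import Mathlib

/-!
On `D²w = -2C₁ I` ellipticity and `F 0 = 0` give `F(D²w) ≥ 2λC₁`, so `C₁ ≥ K_f / (2λ)` makes the
second factor at least `K_f` wherever `w ≥ 0`. Taking also `2C₁δ ≥ 1` gives `‖∇w‖ ≥ 1` on `Ω`,
so the degenerate factor `(ε + ‖∇w‖²)^{θ/2}` is at least `1` uniformly in `ε`. Finally, since
`‖x - x₀‖ ≤ R + ‖x₀‖` on `Ω`, the choice `C₂ = K_g + C₁ (R + ‖x₀‖)² + 1` gives `w ≥ K_g + 1`.
-/

open scoped BigOperators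
open MeasureTheory
open scoped Classical

noncomputable section

namespace Paper

/-- `ℝᵈ` with the Euclidean structure. -/
abbrev E (d : ℕ) := EuclideanSpace ℝ (Fin d)

/-- The standard basis vector `eᵢ` of `ℝᵈ`. -/
def e (d : ℕ) (i : Fin d) : E d := EuclideanSpace.single i 1

/-- For a symmetric matrix, the maximum of the absolute values of its eigenvalues. -/
def specNorm {d : ℕ} (M : Matrix (Fin d) (Fin d) ℝ) : ℝ :=
  if h : M.IsHermitian then ⨆ i, |h.eigenvalues i| else 0

/-- `(λ,Λ)`-uniform ellipticity of `F : S(d) → ℝ`. -/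
def UniformlyElliptic (d : ℕ) (lam Lam : ℝ) (F : Matrix (Fin d) (Fin d) ℝ → ℝ) : Prop :=
  ∀ M N : Matrix (Fin d) (Fin d) ℝ, M.IsHermitian → N.PosSemidef →
    lam * specNorm N ≤ F M - F (M + N) ∧ F M - F (M + N) ≤ Lam * specNorm N

/-- The upwind discretisation `|D_h u (x)|²`. -/
def upwindSq (d : ℕ) (h : ℝ) (u : E d → ℝ) (x : E d) : ℝ :=
  (1 / h ^ 2) * ∑ i : Fin d,
    max (max (u x - u (x + h • e d i)) (u x - u (x - h • e d i))) 0 ^ 2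

/-- The monotone discretisation `L_h^A u (x)` of `Tr (A D²u)`. -/
def Lh (d : ℕ) (h : ℝ) (A : Matrix (Fin d) (Fin d) ℝ) (u : E d → ℝ) (x : E d) : ℝ :=
  (∑ i : Fin d, (A i i - ∑ j ∈ Finset.univ.erase i, |A i j|) *
      ((u (x + h • e d i) + u (x - h • e d i) - 2 * u x) / h ^ 2)) +
  ∑ i : Fin d, ∑ j ∈ Finset.univ.filter (fun j => i < j),
    (max (A i j) 0 *
        ((u (x + h • (e d i + e d j)) + u (x - h • (e d i + e d j)) - 2 * u x) / h ^ 2) +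
      max (-A i j) 0 *
        ((u (x + h • (e d i - e d j)) + u (x - h • (e d i - e d j)) - 2 * u x) / h ^ 2))

/-- Diagonal dominance of a matrix. -/
def DiagDominant {d : ℕ} (A : Matrix (Fin d) (Fin d) ℝ) : Prop :=
  ∀ i, ∑ j ∈ Finset.univ.erase i, |A i j| ≤ A i i

/-- Isaacs data with ellipticity constants `(λ, Λ)`: symmetric, diagonally dominant matrices
with `λ I ≤ A_{α,β} ≤ Λ I`. -/
def IsaacsData (d : ℕ) {ιA ιB : Type*} (lam Lam : ℝ)
    (A : ιA → ιB → Matrix (Fin d) (Fin d) ℝ) : Prop :=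
  ∀ a b, (A a b).IsHermitian ∧ DiagDominant (A a b) ∧
    (A a b - lam • (1 : Matrix (Fin d) (Fin d) ℝ)).PosSemidef ∧
    (Lam • (1 : Matrix (Fin d) (Fin d) ℝ) - A a b).PosSemidef

/-- Discretised Isaacs operator. -/
def Fh (d : ℕ) {ιA ιB : Type*} (h : ℝ) (A : ιA → ιB → Matrix (Fin d) (Fin d) ℝ)
    (u : E d → ℝ) (x : E d) : ℝ :=
  ⨆ a : ιA, ⨅ b : ιB, -(Lh d h (A a b) u x)

/-- A finite grid `Ω̄_h = Ω_h ∪ ∂Ω_h` whose interior points have all stencil points in the grid. -/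
structure Grid (d : ℕ) (h : ℝ) where
  interior : Finset (E d)
  boundary : Finset (E d)
  disj : Disjoint interior boundary
  nonempty : (interior ∪ boundary).Nonempty
  stencil_ax : ∀ x ∈ interior, ∀ i : Fin d,
    x + h • e d i ∈ interior ∪ boundary ∧ x - h • e d i ∈ interior ∪ boundary
  stencil_diag : ∀ x ∈ interior, ∀ i j : Fin d, i < j →
    x + h • (e d i + e d j) ∈ interior ∪ boundary ∧
    x - h • (e d i + e d j) ∈ interior ∪ boundary ∧
    x + h • (e d i - e d j) ∈ interior ∪ boundary ∧
    x - h • (e d i - e d j) ∈ interior ∪ boundary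

/-- The finite difference scheme `G_h` for the regularised pure degenerate equation. -/
def scheme (d : ℕ) {ιA ιB : Type*} {h : ℝ} (ε θ : ℝ)
    (A : ιA → ιB → Matrix (Fin d) (Fin d) ℝ) (G : Grid d h)
    (f g : E d → ℝ) (u : E d → ℝ) (x : E d) : ℝ :=
  if x ∈ G.interior then
    ε * u x + Fh d h A u x - f x / (ε + upwindSq d h u x) ^ (θ / 2)
  else u x - g x

/-- The finite difference scheme `G_h` for the regularised free transmission problem. -/
def schemeT (d : ℕ) {ιA ιB : Type*} {h : ℝ} (ε : ℝ) (θe : ℝ → ℝ)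
    (A : ιA → ιB → Matrix (Fin d) (Fin d) ℝ) (G : Grid d h)
    (f g : E d → ℝ) (u : E d → ℝ) (x : E d) : ℝ :=
  if x ∈ G.interior then
    ε * u x + Fh d h A u x - f x / (ε + upwindSq d h u x) ^ (θe (u x) / 2)
  else u x - g x

/-- The properties of the regularised degeneracy exponent `θ_ε` used in the transmission scheme. -/
def ThetaInterp (ε θ₁ θ₂ : ℝ) (θe : ℝ → ℝ) : Prop :=
  Monotone θe ∧ (∀ t, θ₁ ≤ θe t ∧ θe t ≤ θ₂) ∧
    (∀ t, t ≤ -ε → θe t = θ₁) ∧ (∀ t, ε ≤ t → θe t = θ₂)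

/-- The Hessian matrix of `φ : ℝᵈ → ℝ` at `x`. -/
def hessianMatrix (d : ℕ) (φ : E d → ℝ) (x : E d) : Matrix (Fin d) (Fin d) ℝ :=
  Matrix.of fun i j => fderiv ℝ (fun y => fderiv ℝ φ y (e d j)) x (e d i)

/-- The piecewise-linear interpolation `Θ_ε` between the degeneracy rates `θ₁` and `θ₂`. -/
def ThetaStep (θ₁ θ₂ ε t : ℝ) : ℝ :=
  if t ≤ -ε then θ₁
  else if t < ε then (θ₂ - θ₁) / (2 * ε) * t + (θ₁ + θ₂) / 2
  else θ₂

lemma _root_.Matrix.IsHermitian.eigenvalues_smul_one {n : Type*} [Fintype n] [DecidableEq n]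
    [Nonempty n] {c : ℝ} (hA : (c • (1 : Matrix n n ℝ)).IsHermitian) (i : n) :
    hA.eigenvalues i = c := by
  have h : hA.eigenvalues i ∈ spectrum ℝ (algebraMap ℝ (Matrix n n ℝ) c) := by
    rw [Algebra.algebraMap_eq_smul_one, hA.spectrum_real_eq_range_eigenvalues]
    exact ⟨i, rfl⟩
  rwa [spectrum.scalar_eq, Set.mem_singleton_iff] at h

lemma specNorm_smul_one {d : ℕ} (hd : 1 ≤ d) (c : ℝ) :
    specNorm (c • (1 : Matrix (Fin d) (Fin d) ℝ)) = |c| := by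
  have : Nonempty (Fin d) := ⟨⟨0, hd⟩⟩
  have hA : (c • (1 : Matrix (Fin d) (Fin d) ℝ)).IsHermitian :=
    Matrix.isHermitian_one.smul (IsSelfAdjoint.all c)
  simp only [specNorm, dif_pos hA, hA.eigenvalues_smul_one, ciSup_const]

lemma UniformlyElliptic.mul_le_apply_neg_smul_one {d : ℕ} (hd : 1 ≤ d) {lam Lam : ℝ}
    {F : Matrix (Fin d) (Fin d) ℝ → ℝ} (hF : UniformlyElliptic d lam Lam F) (hF0 : F 0 = 0)
    {c : ℝ} (hc : 0 ≤ c) :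
    lam * c ≤ F ((-c) • (1 : Matrix (Fin d) (Fin d) ℝ)) := by
  have h := (hF ((-c) • 1) (c • 1) (Matrix.isHermitian_one.smul (IsSelfAdjoint.all _))
    (Matrix.PosSemidef.one.smul hc)).1
  rwa [← add_smul, neg_add_cancel, zero_smul, hF0, sub_zero, specNorm_smul_one hd,
    abs_of_nonneg hc] at h

lemma one_le_rpow_add_norm_smul_sq {V : Type*} [SeminormedAddCommGroup V] [NormedSpace ℝ V]
    {ε θ c : ℝ} {v : V} (hε : 0 ≤ ε) (hθ : 0 ≤ θ) (hcv : 1 ≤ |c| * ‖v‖) :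
    1 ≤ (ε + ‖c • v‖ ^ 2) ^ θ := by
  refine Real.one_le_rpow ?_ hθ
  rw [norm_smul, Real.norm_eq_abs]
  nlinarith

theorem classical_barrier_general {d : ℕ} (hd : 1 ≤ d) (lam Lam θ R δ Kf Kg : ℝ)
    (hlam : 0 < lam) (hθ : 1 ≤ θ) (hδ : 0 < δ)
    (hKf : 0 ≤ Kf) (hKg : 0 ≤ Kg)
    (F : Matrix (Fin d) (Fin d) ℝ → ℝ) (hF : UniformlyElliptic d lam Lam F)
    (hF0 : F 0 = 0)
    (Ω : Set (E d)) (hΩ : Ω ⊆ Metric.closedBall 0 R)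
    (x₀ : E d) (hx₀ : ∀ x ∈ Ω, δ ≤ ‖x - x₀‖) :
    ∃ C₁ C₂ : ℝ, 0 < C₁ ∧ 0 < C₂ ∧
      (∀ x ∈ Ω, Kg ≤ C₂ - C₁ * ‖x - x₀‖ ^ 2) ∧
      (∀ ε : ℝ, 0 < ε → ε < 1 → ∀ x ∈ Ω,
        Kf ≤ (ε + ‖(-(2 * C₁)) • (x - x₀)‖ ^ 2) ^ (θ / 2) *
          (ε * (C₂ - C₁ * ‖x - x₀‖ ^ 2) +
            F ((-(2 * C₁)) • (1 : Matrix (Fin d) (Fin d) ℝ)))) := by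
  set C₁ := max (1 / (2 * δ)) (Kf / (2 * lam))
  set C₂ := Kg + C₁ * (R + ‖x₀‖) ^ 2 + 1
  have hC₁ : 0 < C₁ := lt_max_of_lt_left (by positivity)
  have hw : ∀ x ∈ Ω, Kg + 1 ≤ C₂ - C₁ * ‖x - x₀‖ ^ 2 := by
    intro x hx
    have hxR : ‖x‖ ≤ R := mem_closedBall_zero_iff.mp (hΩ hx)
    have hdist : ‖x - x₀‖ ≤ R + ‖x₀‖ := (norm_sub_le x x₀).trans (by linarith)
    have := mul_le_mul_of_nonneg_left (pow_le_pow_left₀ (norm_nonneg _) hdist 2) hC₁.le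
    linarith
  have hgrad : ∀ x ∈ Ω, 1 ≤ |-(2 * C₁)| * ‖x - x₀‖ := by
    intro x hx
    have h : 1 ≤ 2 * δ * C₁ := (div_le_iff₀' (by positivity)).mp (le_max_left _ _)
    rw [abs_neg, abs_of_pos (by positivity)]
    nlinarith [hx₀ x hx]
  have hFw : Kf ≤ F ((-(2 * C₁)) • (1 : Matrix (Fin d) (Fin d) ℝ)) := by
    have h : Kf ≤ 2 * lam * C₁ := (div_le_iff₀' (by positivity)).mp (le_max_right _ _)
    linarith [hF.mul_le_apply_neg_smul_one hd hF0 (by positivity : 0 ≤ 2 * C₁)]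
  refine ⟨C₁, C₂, hC₁, by positivity, fun x hx => by linarith [hw x hx], ?_⟩
  intro ε hε _ x hx
  have hεw : 0 ≤ ε * (C₂ - C₁ * ‖x - x₀‖ ^ 2) := mul_nonneg hε.le (by linarith [hw x hx])
  have hbracket : Kf ≤ ε * (C₂ - C₁ * ‖x - x₀‖ ^ 2) +
      F ((-(2 * C₁)) • (1 : Matrix (Fin d) (Fin d) ℝ)) := by linarith
  exact hbracket.trans <| le_mul_of_one_le_left (hKf.trans hbracket) <|
    one_le_rpow_add_norm_smul_sq hε.le (by linarith) (hgrad x hx)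

/-- Classical global supersolution barrier for the regularised
equation: for a uniformly elliptic `F` with `F(0) = 0`, the paraboloid
`w(x) = C₂ − C₁‖x − x₀‖²` dominates `K_g` on `Ω` and satisfies the pointwise
supersolution inequality
`(ε + ‖∇w‖²)^{θ/2}(ε w + F(D²w)) ≥ K_f` on `Ω` for every `ε ∈ (0,1)`,
with `∇w(x) = −2C₁(x − x₀)` and `D²w = −2C₁ I`, the constants being
independent of `ε`. -/
theorem classical_barrier {d : ℕ} (hd : 1 ≤ d) (lam Lam θ R δ Kf Kg : ℝ)
    (hlam : 0 < lam) (hlamLam : lam ≤ Lam) (hθ : 1 ≤ θ) (hR : 0 < R) (hδ : 0 < δ)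
    (hKf : 0 ≤ Kf) (hKg : 0 ≤ Kg)
    (F : Matrix (Fin d) (Fin d) ℝ → ℝ) (hF : UniformlyElliptic d lam Lam F)
    (hF0 : F 0 = 0)
    (Ω : Set (E d)) (hΩ : Ω ⊆ Metric.closedBall 0 R)
    (x₀ : E d) (hx₀ : ∀ x ∈ Ω, δ ≤ ‖x - x₀‖) :
    ∃ C₁ C₂ : ℝ, 0 < C₁ ∧ 0 < C₂ ∧
      (∀ x ∈ Ω, Kg ≤ C₂ - C₁ * ‖x - x₀‖ ^ 2) ∧
      (∀ ε : ℝ, 0 < ε → ε < 1 → ∀ x ∈ Ω,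
        Kf ≤ (ε + ‖(-(2 * C₁)) • (x - x₀)‖ ^ 2) ^ (θ / 2) *
          (ε * (C₂ - C₁ * ‖x - x₀‖ ^ 2) +
            F ((-(2 * C₁)) • (1 : Matrix (Fin d) (Fin d) ℝ)))) :=
  classical_barrier_general hd lam Lam θ R δ Kf Kg hlam hθ hδ hKf hKg F hF hF0 Ω hΩ x₀ hx₀

end Paper
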